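/- For coprime integers p, q ≥ 2, choose a, b ∈ ℕ with qa + pb = pq − 1 (which exist and satisfy 1 ≤ a ≤ p−1 or b ≥ 1 appropriately). Then ν(x^p − y^q + x^a y^b) = ν(x^p − y^q) − 1 = (p−1)(q−1) − 1. -/

import Mathlib

open MvPolynomial MeasureTheory

/-- The region `Γ₊(f)`: convex closure of the union of translated positive quadrants at the
points of the support of `f` (omitting the origin). -/
noncomputable def gammaPlus (f : MvPolynomial (Fin 2) ℂ) : Set (ℝ × ℝ) :=
  convexHull ℝ (⋃ m ∈ {m ∈ f.support | m ≠ 0},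
    {z : ℝ × ℝ | (m 0 : ℝ) ≤ z.1 ∧ (m 1 : ℝ) ≤ z.2})

/-- The region bounded by the Newton polygon `Γ(f)` and the coordinate axes. -/
noncomputable def newtonRegion (f : MvPolynomial (Fin 2) ℂ) : Set (ℝ × ℝ) :=
  {z : ℝ × ℝ | 0 ≤ z.1 ∧ 0 ≤ z.2} \ gammaPlus f

/-- The Newton number `ν(f) = 2S - a - b + 1` where `S` is the area of the region bounded
by the Newton polygon and the axes and `a`, `b` are the lengths of the intersections of that
region with the `x`- and `y`-axis. -/
noncomputable def newtonNumber (f : MvPolynomial (Fin 2) ℂ) : ℝ :=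
  2 * (volume (newtonRegion f)).toReal
    - (volume {x : ℝ | (x, (0:ℝ)) ∈ newtonRegion f}).toReal
    - (volume {y : ℝ | ((0:ℝ), y) ∈ newtonRegion f}).toReal + 1

/-!
The exponents of `x^p - y^q` are `(p, 0)` and `(0, q)`; the perturbation adds `(a, b)`, which
exists by Bézout and, since `qa + pb = pq - 1 < pq`, has `0 < a < p`, `0 < b < q` and lies
strictly below the segment from `(p, 0)` to `(0, q)`. So the Newton polygon becomes the convex
broken line `(0, q)`–`(a, b)`–`(p, 0)`, the axis intercepts stay `p` and `q`, and the region
below the broken line is the union of two trapezoids of total area `(qa + pb) / 2`. Hence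
`ν = qa + pb - p - q + 1`: this is `pq - p - q` after the perturbation and, taking the broken
line through the midpoint `(p/2, q/2)`, `(p - 1)(q - 1)` for `x^p - y^q`.
-/

open Set

theorem exists_mul_add_mul_eq_mul_sub_one {p q : ℕ} (hp : p ≠ 0) (hpq : Nat.Coprime p q) :
    ∃ a b : ℕ, q * a + p * b = p * q - 1 := by
  obtain ⟨a, hap, ha⟩ := Nat.exists_mul_mod_eq_of_coprime (p * q - 1) hpq.symm hp
  have hle : q * a ≤ p * q - 1 := by
    rcases Nat.eq_zero_or_pos q with rfl | hq
    · simp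
    · have : q * (a + 1) ≤ q * p := Nat.mul_le_mul_left q hap
      rw [mul_add_one, mul_comm q p] at this
      omega
  obtain ⟨b, hb⟩ : p ∣ p * q - 1 - q * a := (Nat.modEq_iff_dvd' hle).1 ha
  exact ⟨a, b, by omega⟩

theorem pos_lt_of_mul_add_mul_add_one_eq_mul {p q a b : ℕ} (hp : 2 ≤ p) (hq : 2 ≤ q)
    (h : q * a + p * b + 1 = p * q) : 0 < a ∧ a < p ∧ 0 < b ∧ b < q := by
  have hap : a < p := by nlinarith
  have hbq : b < q := by nlinarith
  refine ⟨Nat.pos_of_ne_zero ?_, hap, Nat.pos_of_ne_zero ?_, hbq⟩ <;> rintro rfl <;> nlinarith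

theorem MvPolynomial.support_add_monomial {σ R : Type*} [CommSemiring R] [DecidableEq σ]
    {f : MvPolynomial σ R} {s : σ →₀ ℕ} {c : R} (hc : c ≠ 0) (hs : s ∉ f.support) :
    (f + monomial s c).support = insert s f.support := by
  ext m
  rcases eq_or_ne s m with rfl | h
  · simp [mem_support_iff, notMem_support_iff.1 hs, hc]
  · simp [mem_support_iff, coeff_monomial, h, h.symm]

theorem support_X_pow_sub_X_pow {p q : ℕ} (hp : p ≠ 0) :
    (X 0 ^ p - X 1 ^ q : MvPolynomial (Fin 2) ℂ).support
      = {Finsupp.single 1 q, Finsupp.single 0 p} := by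
  rw [X_pow_eq_monomial, X_pow_eq_monomial, sub_eq_add_neg, ← map_neg,
    support_add_monomial (neg_ne_zero.2 one_ne_zero), support_monomial, if_neg one_ne_zero]
  simp [support_monomial, Finsupp.single_eq_single_iff, hp]

theorem gammaPlus_eq_convexHull (f : MvPolynomial (Fin 2) ℂ) :
    gammaPlus f = convexHull ℝ (⋃ m ∈ {m ∈ f.support | m ≠ 0}, Ici ((m 0 : ℝ), (m 1 : ℝ))) :=
  rfl

theorem gammaPlus_X_pow_sub_X_pow {p q : ℕ} (hp : p ≠ 0) (hq : q ≠ 0) :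
    gammaPlus (X 0 ^ p - X 1 ^ q) = convexHull ℝ (Ici ((p : ℝ), 0) ∪ Ici (0, (q : ℝ))) := by
  rw [gammaPlus_eq_convexHull, support_X_pow_sub_X_pow hp,
    Finset.filter_true_of_mem (by simp [hp, hq])]
  simp [union_comm]

theorem gammaPlus_X_pow_sub_X_pow_add_X_pow_mul_X_pow {p q a b : ℕ} (hp : p ≠ 0) (hq : q ≠ 0)
    (ha : a ≠ 0) (hb : b ≠ 0) :
    gammaPlus (X 0 ^ p - X 1 ^ q + X 0 ^ a * X 1 ^ b)
      = convexHull ℝ (Ici ((p : ℝ), 0) ∪ Ici (0, (q : ℝ)) ∪ Ici ((a : ℝ), (b : ℝ))) := by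
  have hsupp : (X 0 ^ p - X 1 ^ q + X 0 ^ a * X 1 ^ b : MvPolynomial (Fin 2) ℂ).support
      = {Finsupp.single 0 a + Finsupp.single 1 b, Finsupp.single 1 q, Finsupp.single 0 p} := by
    have hab : Finsupp.single 0 a + Finsupp.single 1 b ∉
        (X 0 ^ p - X 1 ^ q : MvPolynomial (Fin 2) ℂ).support := by
      simp [support_X_pow_sub_X_pow hp, Finsupp.ext_iff, Fin.forall_fin_two, ha, hb]
    rw [X_pow_eq_monomial (e := a), X_pow_eq_monomial (e := b), monomial_mul, one_mul,
      support_add_monomial one_ne_zero hab, support_X_pow_sub_X_pow hp]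
  rw [gammaPlus_eq_convexHull, hsupp, Finset.filter_true_of_mem (by simp [hp, hq, ha])]
  simp [union_comm, union_left_comm]

/-- The trapezoid over `[x₀, x₁)` under the segment from `(x₀, y₀)` to `(x₁, y₁)`, with its
bottom edge but without its top edge. -/
def trapezoid (x₀ x₁ y₀ y₁ : ℝ) : Set (ℝ × ℝ) :=
  {z | z.1 ∈ Ico x₀ x₁ ∧ 0 ≤ z.2 ∧ (x₁ - x₀) * z.2 < y₀ * (x₁ - z.1) + y₁ * (z.1 - x₀)}

theorem setIntegral_Ico_affine {x₀ x₁ : ℝ} (h : x₀ < x₁) (y₀ y₁ : ℝ) :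
    ∫ x in Ico x₀ x₁, (y₀ * (x₁ - x) + y₁ * (x - x₀)) / (x₁ - x₀)
      = (x₁ - x₀) * (y₀ + y₁) / 2 := by
  have : x₁ - x₀ ≠ 0 := sub_ne_zero.2 h.ne'
  rw [integral_Ico_eq_integral_Ioo, ← integral_Ioc_eq_integral_Ioo,
    ← intervalIntegral.integral_of_le h.le, intervalIntegral.integral_div,
    intervalIntegral.integral_add, intervalIntegral.integral_const_mul,
    intervalIntegral.integral_const_mul, intervalIntegral.integral_comp_sub_left (fun x => x),
    intervalIntegral.integral_comp_sub_right (fun x => x)]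
  · simp only [sub_self, integral_id]
    field_simp
    ring
  all_goals exact Continuous.intervalIntegrable (by fun_prop) _ _

theorem measurableSet_trapezoid (x₀ x₁ y₀ y₁ : ℝ) : MeasurableSet (trapezoid x₀ x₁ y₀ y₁) :=
  (measurable_fst measurableSet_Ico).inter
    ((measurableSet_le measurable_const measurable_snd).inter
      (measurableSet_lt (f := fun z : ℝ × ℝ => (x₁ - x₀) * z.2)
        (g := fun z => y₀ * (x₁ - z.1) + y₁ * (z.1 - x₀)) (by fun_prop) (by fun_prop)))

theorem volume_trapezoid {x₀ x₁ y₀ y₁ : ℝ} (h : x₀ < x₁) (hy₀ : 0 ≤ y₀) (hy₁ : 0 ≤ y₁) :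
    volume (trapezoid x₀ x₁ y₀ y₁) = ENNReal.ofReal ((x₁ - x₀) * (y₀ + y₁) / 2) := by
  have hx : 0 < x₁ - x₀ := sub_pos.2 h
  set g : ℝ → ℝ := fun x => (y₀ * (x₁ - x) + y₁ * (x - x₀)) / (x₁ - x₀)
  have hsub : regionBetween (fun _ => 0) g (Ico x₀ x₁) ⊆ trapezoid x₀ x₁ y₀ y₁ :=
    fun z ⟨hz, hz₀, hzg⟩ => ⟨hz, hz₀.le, by rwa [lt_div_iff₀' hx] at hzg⟩
  have hnull :
      volume (trapezoid x₀ x₁ y₀ y₁ \ regionBetween (fun _ => 0) g (Ico x₀ x₁)) = 0 := by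
    refine measure_mono_null (t := univ ×ˢ {0}) ?_ (by simp [Measure.volume_eq_prod])
    rintro z ⟨⟨hz, hz₀, hzg⟩, hz'⟩
    refine ⟨trivial, hz₀.antisymm' (not_lt.1 fun hpos => hz' ⟨hz, hpos, ?_⟩)⟩
    rwa [lt_div_iff₀' hx]
  have hg : Continuous g := by fun_prop
  rw [← measure_eq_measure_of_null_sdiff hsub hnull, Measure.volume_eq_prod,
    volume_regionBetween_eq_integral integrableOn_zero
      (hg.integrableOn_Icc.mono_set Ico_subset_Icc_self) measurableSet_Ico fun x hx => ?_]
  · simp only [Pi.sub_apply, sub_zero, g, setIntegral_Ico_affine h]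
  · have : 0 ≤ x₁ - x := by linarith [hx.2]
    have : 0 ≤ x - x₀ := by linarith [hx.1]
    positivity

theorem mem_convexHull_Ici_union_Ici {x₀ x₁ y₀ y₁ : ℝ} (hx : x₀ < x₁) (hy : y₀ < y₁)
    {z : ℝ × ℝ} (hz₁ : x₀ ≤ z.1) (hz₂ : y₀ ≤ z.2)
    (hz : (x₁ - x₀) * (y₁ - y₀) ≤ (y₁ - y₀) * (z.1 - x₀) + (x₁ - x₀) * (z.2 - y₀)) :
    z ∈ convexHull ℝ (Ici (x₁, y₀) ∪ Ici (x₀, y₁)) := by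
  set c := (y₁ - y₀) * (z.1 - x₀) + (x₁ - x₀) * (z.2 - y₀)
  have hX : 0 < x₁ - x₀ := sub_pos.2 hx
  have hY : 0 < y₁ - y₀ := sub_pos.2 hy
  have hc : 0 < c := (mul_pos hX hY).trans_le hz
  -- `z` is a convex combination of the points where the parallel through `z` to the segment
  -- from `(x₁, y₀)` to `(x₀, y₁)` meets the lines `y = y₀` and `x = x₀`
  have hA : (x₀ + c / (y₁ - y₀), y₀) ∈ Ici (x₁, y₀) :=
    Prod.mk_le_mk.2 ⟨by rw [← sub_le_iff_le_add', le_div_iff₀ hY]; linarith, le_rfl⟩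
  have hB : (x₀, y₀ + c / (x₁ - x₀)) ∈ Ici (x₀, y₁) :=
    Prod.mk_le_mk.2 ⟨le_rfl, by rw [← sub_le_iff_le_add', le_div_iff₀ hX]; linarith⟩
  have hcomb : z = ((y₁ - y₀) * (z.1 - x₀) / c) • (x₀ + c / (y₁ - y₀), y₀)
      + ((x₁ - x₀) * (z.2 - y₀) / c) • (x₀, y₀ + c / (x₁ - x₀)) := by
    refine Prod.ext ?_ ?_ <;>
      simp only [Prod.fst_add, Prod.snd_add, Prod.smul_mk, smul_eq_mul] <;> field_simp <;>
      simp only [c] <;> ring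
  rw [hcomb]
  exact convex_convexHull ℝ _ (subset_convexHull ℝ _ (mem_union_left _ hA))
    (subset_convexHull ℝ _ (mem_union_right _ hB))
    (div_nonneg (mul_nonneg hY.le (sub_nonneg.2 hz₁)) hc.le)
    (div_nonneg (mul_nonneg hX.le (sub_nonneg.2 hz₂)) hc.le)
    (by rw [← add_div, div_self hc.ne'])

section BrokenLine

/-- The closed region of the first quadrant on or above the broken line
`(0, q)`–`(a, b)`–`(p, 0)`. -/
def aboveBrokenLine (p q a b : ℝ) : Set (ℝ × ℝ) :=
  {z | 0 ≤ z.1 ∧ 0 ≤ z.2 ∧ a * q ≤ (q - b) * z.1 + a * z.2 ∧ p * b ≤ b * z.1 + (p - a) * z.2}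

def belowBrokenLine (p q a b : ℝ) : Set (ℝ × ℝ) :=
  {z | 0 ≤ z.1 ∧ 0 ≤ z.2} \ aboveBrokenLine p q a b

theorem convex_aboveBrokenLine (p q a b : ℝ) : Convex ℝ (aboveBrokenLine p q a b) := by
  rintro z ⟨hz₁, hz₂, hz₃, hz₄⟩ w ⟨hw₁, hw₂, hw₃, hw₄⟩ s t hs ht hst
  obtain rfl : t = 1 - s := by linarith
  simp only [aboveBrokenLine, mem_ofPred_eq, Prod.fst_add, Prod.snd_add, Prod.smul_fst,
    Prod.smul_snd, smul_eq_mul]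
  refine ⟨by positivity, by positivity, ?_, ?_⟩
  · nlinarith [mul_le_mul_of_nonneg_left hz₃ hs, mul_le_mul_of_nonneg_left hw₃ ht]
  · nlinarith [mul_le_mul_of_nonneg_left hz₄ hs, mul_le_mul_of_nonneg_left hw₄ ht]

variable {p q a b : ℝ}

theorem convexHull_Ici_union_Ici_union_Ici (ha : 0 < a) (hb : 0 < b) (hap : a < p)
    (hbq : b < q) (hconv : q * a + p * b ≤ p * q) :
    convexHull ℝ (Ici (p, 0) ∪ Ici (0, q) ∪ Ici (a, b)) = aboveBrokenLine p q a b := by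
  refine (convexHull_min ?_ (convex_aboveBrokenLine p q a b)).antisymm ?_
  · rintro z ((hz | hz) | hz) <;> obtain ⟨hz₁, hz₂⟩ := Prod.mk_le_mk.1 hz <;>
      exact ⟨by linarith, by linarith, by nlinarith, by nlinarith⟩
  · rintro z ⟨hz₁, hz₂, hz₃, hz₄⟩
    rcases le_or_gt b z.2 with hbz | hzb
    · refine convexHull_mono ?_ (mem_convexHull_Ici_union_Ici ha hbq hz₁ hbz (by linarith))
      exact union_subset subset_union_right (subset_union_right.trans subset_union_left)
    · have haz : a ≤ z.1 := by nlinarith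
      refine convexHull_mono ?_ (mem_convexHull_Ici_union_Ici hap hb haz hz₂ (by linarith))
      exact union_subset (subset_union_left.trans subset_union_left) subset_union_right

theorem convexHull_Ici_union_Ici_eq_aboveBrokenLine_half (hp : 0 < p) (hq : 0 < q) :
    convexHull ℝ (Ici (p, 0) ∪ Ici (0, q)) = aboveBrokenLine p q (p / 2) (q / 2) := by
  rw [← convexHull_Ici_union_Ici_union_Ici (by positivity) (by positivity) (by linarith)
    (by linarith) (by linarith)]
  refine (convexHull_mono subset_union_left).antisymm (convexHull_min ?_ (convex_convexHull ℝ _))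
  refine union_subset (subset_convexHull ℝ _) fun z hz => ?_
  obtain ⟨hz₁, hz₂⟩ := Prod.mk_le_mk.1 hz
  exact mem_convexHull_Ici_union_Ici hp hq (by linarith) (by linarith) (by nlinarith)

theorem belowBrokenLine_eq_union_trapezoid (ha : 0 < a) (hb : 0 < b) (hap : a < p)
    (hbq : b < q) (hconv : q * a + p * b ≤ p * q) :
    belowBrokenLine p q a b = trapezoid 0 a q b ∪ trapezoid a p b 0 := by
  ext ⟨x, y⟩
  simp only [belowBrokenLine, aboveBrokenLine, trapezoid, mem_sdiff, mem_union, mem_ofPred_eq,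
    mem_Ico]
  constructor
  · rintro ⟨⟨hx, hy⟩, h⟩
    have h' : (q - b) * x + a * y < a * q ∨ b * x + (p - a) * y < p * b := by
      by_contra! h'
      exact h ⟨hx, hy, h'⟩
    -- `hconv` says the broken line is convex: left of `a` its second piece lies below the
    -- first, right of `a` the first lies below the second
    rcases lt_or_ge x a with hxa | hax
    · refine Or.inl ⟨⟨hx, hxa⟩, hy, ?_⟩
      rcases h' with h' | h'
      · linarith
      · nlinarith [mul_nonneg (sub_nonneg.2 hxa.le) (sub_nonneg.2 hconv),
          mul_lt_mul_of_pos_left h' ha]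
    · have hxp : x < p := by
        rcases h' with h' | h' <;> nlinarith
      refine Or.inr ⟨⟨hax, hxp⟩, hy, ?_⟩
      rcases h' with h' | h'
      · nlinarith [mul_nonneg (sub_nonneg.2 hax) (sub_nonneg.2 hconv),
          mul_lt_mul_of_pos_left h' (sub_pos.2 hap)]
      · linarith
  · rintro (⟨⟨hx, hxa⟩, hy, h⟩ | ⟨⟨hax, hxp⟩, hy, h⟩)
    · exact ⟨⟨hx, hy⟩, fun h' => by linarith [h'.2.2.1]⟩
    · exact ⟨⟨ha.le.trans hax, hy⟩, fun h' => by linarith [h'.2.2.2]⟩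

theorem mk_zero_mem_belowBrokenLine {x : ℝ} (hb : 0 < b) (hbq : b < q)
    (hconv : q * a + p * b ≤ p * q) :
    (x, 0) ∈ belowBrokenLine p q a b ↔ x ∈ Ico 0 p := by
  simp only [belowBrokenLine, aboveBrokenLine, mem_sdiff, mem_ofPred_eq, mem_Ico]
  constructor
  · rintro ⟨⟨hx, -⟩, h⟩
    exact ⟨hx, lt_of_not_ge fun hpx => h ⟨hx, le_rfl, by nlinarith, by nlinarith⟩⟩
  · rintro ⟨hx, hxp⟩
    exact ⟨⟨hx, le_rfl⟩, fun h => by nlinarith [h.2.2.2]⟩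

theorem zero_mk_mem_belowBrokenLine {y : ℝ} (ha : 0 < a) (hap : a < p)
    (hconv : q * a + p * b ≤ p * q) :
    (0, y) ∈ belowBrokenLine p q a b ↔ y ∈ Ico 0 q := by
  simp only [belowBrokenLine, aboveBrokenLine, mem_sdiff, mem_ofPred_eq, mem_Ico]
  constructor
  · rintro ⟨⟨-, hy⟩, h⟩
    exact ⟨hy, lt_of_not_ge fun hqy => h ⟨le_rfl, hy, by nlinarith, by nlinarith⟩⟩
  · rintro ⟨hy, hyq⟩
    exact ⟨⟨le_rfl, hy⟩, fun h => by nlinarith [h.2.2.1]⟩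

theorem newtonNumber_eq_of_gammaPlus_eq_aboveBrokenLine {f : MvPolynomial (Fin 2) ℂ}
    (ha : 0 < a) (hb : 0 < b) (hap : a < p) (hbq : b < q) (hconv : q * a + p * b ≤ p * q)
    (hf : gammaPlus f = aboveBrokenLine p q a b) :
    newtonNumber f = q * a + p * b - p - q + 1 := by
  have hR : newtonRegion f = belowBrokenLine p q a b := by rw [newtonRegion, hf, belowBrokenLine]
  have hx : {x : ℝ | (x, (0 : ℝ)) ∈ newtonRegion f} = Ico 0 p := by
    ext x
    rw [mem_ofPred_eq, hR, mk_zero_mem_belowBrokenLine hb hbq hconv]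
  have hy : {y : ℝ | ((0 : ℝ), y) ∈ newtonRegion f} = Ico 0 q := by
    ext y
    rw [mem_ofPred_eq, hR, zero_mk_mem_belowBrokenLine ha hap hconv]
  have hdisj : Disjoint (trapezoid 0 a q b) (trapezoid a p b 0) :=
    disjoint_left.2 fun _ h h' => h.1.2.not_ge h'.1.1
  rw [newtonNumber, hx, hy, hR, belowBrokenLine_eq_union_trapezoid ha hb hap hbq hconv,
    measure_union hdisj (measurableSet_trapezoid _ _ _ _), volume_trapezoid ha (by linarith) hb.le,
    volume_trapezoid hap hb.le le_rfl, ← ENNReal.ofReal_add (by nlinarith) (by nlinarith),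
    Real.volume_Ico, Real.volume_Ico, ENNReal.toReal_ofReal (by nlinarith),
    ENNReal.toReal_ofReal (by linarith), ENNReal.toReal_ofReal (by linarith)]
  ring

end BrokenLine

theorem newtonNumber_X_pow_sub_X_pow {p q : ℕ} (hp : 0 < p) (hq : 0 < q) :
    newtonNumber (X 0 ^ p - X 1 ^ q) = ((p : ℝ) - 1) * ((q : ℝ) - 1) := by
  have hp' : (0 : ℝ) < p := Nat.cast_pos.2 hp
  have hq' : (0 : ℝ) < q := Nat.cast_pos.2 hq
  rw [newtonNumber_eq_of_gammaPlus_eq_aboveBrokenLine (by positivity) (by positivity)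
    (by linarith) (by linarith) (by linarith)
    ((gammaPlus_X_pow_sub_X_pow hp.ne' hq.ne').trans
      (convexHull_Ici_union_Ici_eq_aboveBrokenLine_half hp' hq'))]
  ring

theorem newtonNumber_X_pow_sub_X_pow_add_X_pow_mul_X_pow {p q a b : ℕ} (ha : 0 < a) (hb : 0 < b)
    (hap : a < p) (hbq : b < q) (hconv : q * a + p * b ≤ p * q) :
    newtonNumber (X 0 ^ p - X 1 ^ q + X 0 ^ a * X 1 ^ b)
      = (q : ℝ) * a + p * b - p - q + 1 := by
  have hconv' : (q : ℝ) * a + p * b ≤ p * q := by exact_mod_cast hconv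
  exact newtonNumber_eq_of_gammaPlus_eq_aboveBrokenLine (Nat.cast_pos.2 ha) (Nat.cast_pos.2 hb)
    (Nat.cast_lt.2 hap) (Nat.cast_lt.2 hbq) hconv'
    ((gammaPlus_X_pow_sub_X_pow_add_X_pow_mul_X_pow (by omega) (by omega) ha.ne' hb.ne').trans
      (convexHull_Ici_union_Ici_union_Ici (Nat.cast_pos.2 ha) (Nat.cast_pos.2 hb)
        (Nat.cast_lt.2 hap) (Nat.cast_lt.2 hbq) hconv'))

/-- For coprime `p, q ≥ 2`, lattice points `(a,b) ∈ ℕ²` with `qa + pb = pq - 1` exist, and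
for any such point `ν(x^p - y^q + x^a y^b) = ν(x^p - y^q) - 1 = (p-1)(q-1) - 1`. -/
theorem nu_drop_one_coprime (p q : ℕ) (hp : 2 ≤ p) (hq : 2 ≤ q)
    (hpq : Nat.gcd p q = 1) :
    (∃ a b : ℕ, q * a + p * b = p * q - 1) ∧
    ∀ a b : ℕ, q * a + p * b = p * q - 1 →
      newtonNumber ((X 0) ^ p - (X 1) ^ q + (X 0) ^ a * (X 1) ^ b)
          = newtonNumber ((X 0) ^ p - (X 1) ^ q) - 1 ∧
      newtonNumber ((X 0) ^ p - (X 1) ^ q) - 1 = ((p : ℝ) - 1) * ((q : ℝ) - 1) - 1 := by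
  refine ⟨exists_mul_add_mul_eq_mul_sub_one (by omega) hpq, fun a b hab => ?_⟩
  have hab₁ : q * a + p * b + 1 = p * q := by
    have : 4 ≤ p * q := by nlinarith
    omega
  obtain ⟨ha, hap, hb, hbq⟩ := pos_lt_of_mul_add_mul_add_one_eq_mul hp hq hab₁
  have hab' : (q : ℝ) * a + p * b + 1 = p * q := by exact_mod_cast hab₁
  rw [newtonNumber_X_pow_sub_X_pow_add_X_pow_mul_X_pow ha hb hap hbq (by omega),
    newtonNumber_X_pow_sub_X_pow (by omega) (by omega)]
  constructor <;> linarith
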